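/- Let U = [U_k U_c] ∈ ℝ^{m×m} and V = [V_k V_c] ∈ ℝ^{n×n} be orthogonal matrices with U_k ∈ ℝ^{m×k}, V_k ∈ ℝ^{n×k}, and let A = U_k·D·V_kᵀ for some D ∈ ℝ^{k×k}. For any Δ ∈ ℝ^{m×n}, define Δ₂ = U_c·U_cᵀ·Δ·V_c·V_cᵀ and Δ₁ = Δ − Δ₂. Then ‖Δ‖_* + 2‖A‖_* − 2‖Δ + A‖_* ≤ 3‖Δ₁‖_* − ‖Δ₂‖_*. -/

import Mathlib

open Matrix

/-- Frobenius norm of a real matrix: `(tr(MᵀM))^{1/2}`. -/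
noncomputable def frobNorm {m n : ℕ} (M : Matrix (Fin m) (Fin n) ℝ) : ℝ :=
  Real.sqrt ((Mᵀ * M).trace)

/-- The positive semidefinite square root, as `Matrix.PosSemidef.sqrt` was defined in Mathlib
(Dec 2024); that declaration has since been removed. -/
noncomputable def Matrix.PosSemidef.sqrt {n : Type*} [Fintype n] [DecidableEq n]
    {A : Matrix n n ℝ} (hA : A.PosSemidef) : Matrix n n ℝ :=
  hA.1.eigenvectorUnitary.1 * diagonal ((↑) ∘ (Real.sqrt ·) ∘ hA.1.eigenvalues) *
  (star hA.1.eigenvectorUnitary : Matrix n n ℝ)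

/-- Nuclear norm of a real matrix: the trace of the positive semidefinite
square root of `MᵀM` (= sum of singular values). -/
noncomputable def nuclearNorm {m n : ℕ} (M : Matrix (Fin m) (Fin n) ℝ) : ℝ :=
  (Matrix.posSemidef_conjTranspose_mul_self M).sqrt.trace

/-- Spectral (ℓ2 → ℓ2 operator) norm of a real matrix: its largest singular value. -/
noncomputable def opNorm {m n : ℕ} (M : Matrix (Fin m) (Fin n) ℝ) : ℝ :=
  ‖LinearMap.toContinuousLinearMap (Matrix.toEuclideanLin M)‖

/-- The ℓ1 norm of the vectorization of a matrix. -/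
noncomputable def vecL1 {m n : ℕ} (M : Matrix (Fin m) (Fin n) ℝ) : ℝ :=
  ∑ i, ∑ j, |M i j|

/-- The ℓ∞ norm of the vectorization of a matrix. -/
noncomputable def vecLinf {m n : ℕ} (M : Matrix (Fin m) (Fin n) ℝ) : ℝ :=
  ⨆ i, ⨆ j, |M i j|

/-- Frobenius (trace) inner product of two matrices. -/
noncomputable def traceInner {m n : ℕ} (M N : Matrix (Fin m) (Fin n) ℝ) : ℝ :=
  (Mᵀ * N).trace

open scoped Classical in
/-- The inverse of the positive semidefinite square root of a positive semidefinite
matrix (junk value `0` if the matrix is not positive semidefinite). -/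
noncomputable def matInvSqrt {r : ℕ} (S : Matrix (Fin r) (Fin r) ℝ) :
    Matrix (Fin r) (Fin r) ℝ :=
  if h : S.PosSemidef then h.sqrt⁻¹ else 0

/-!
The nuclear norm is dual to the operator norm: `tr (Wᵀ M) ≤ ‖M‖_*` whenever `Wᵀ W ≤ 1`, with
equality when `W` is the partial isometry of the polar decomposition of `M`; hence `‖·‖_*` is
subadditive. Since `Δ₂` and `A` have orthogonal row and column spaces,
`(Δ₂ + A)ᵀ (Δ₂ + A) = Δ₂ᵀ Δ₂ + Aᵀ A` with summands whose product vanishes, so their square roots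
add and `‖Δ₂ + A‖_* = ‖Δ₂‖_* + ‖A‖_*`. The inequality is then the sum of
`‖Δ‖_* ≤ ‖Δ₁‖_* + ‖Δ₂‖_*` and twice `‖Δ₂‖_* + ‖A‖_* = ‖Δ₂ + A‖_* ≤ ‖Δ + A‖_* + ‖Δ₁‖_*`.
-/

open scoped MatrixOrder ComplexOrder

theorem IsSelfAdjoint.mul_eq_zero_comm {R : Type*} [NonUnitalSemiring R] [StarRing R] {a b : R}
    (ha : IsSelfAdjoint a) (hb : IsSelfAdjoint b) (h : a * b = 0) : b * a = 0 := by
  simpa [ha.star_eq, hb.star_eq] using congrArg star h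

namespace Matrix

theorem PosSemidef.sqrt_eq_cfcSqrt {n : Type*} [Fintype n] [DecidableEq n]
    {A : Matrix n n ℝ} (hA : A.PosSemidef) : hA.sqrt = CFC.sqrt A := by
  rw [CFC.sqrt_eq_real_sqrt A hA.nonneg, cfcₙ_eq_cfc, hA.1.cfc_eq, IsHermitian.cfc,
    Unitary.conjStarAlgAut_apply]
  rfl

section CFCSqrt

variable {𝕜 n : Type*} [RCLike 𝕜] [Fintype n] [DecidableEq n] {P Q : Matrix n n 𝕜}

theorem cfcSqrt_mul_eq_zero (hP : 0 ≤ P) (hQ : Q.IsHermitian) (h : P * Q = 0) :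
    CFC.sqrt P * Q = 0 := by
  have hsqrt : IsHermitian (CFC.sqrt P) := (CFC.sqrt_nonneg P).isSelfAdjoint
  rw [← conjTranspose_mul_self_eq_zero, conjTranspose_mul, hsqrt.eq, hQ.eq, Matrix.mul_assoc,
    ← Matrix.mul_assoc (CFC.sqrt P), CFC.sqrt_mul_sqrt_self P hP, h, Matrix.mul_zero]

theorem cfcSqrt_mul_cfcSqrt_eq_zero (hP : 0 ≤ P) (hQ : 0 ≤ Q) (h : P * Q = 0) :
    CFC.sqrt P * CFC.sqrt Q = 0 := by
  have hsqrtP := (CFC.sqrt_nonneg P).isSelfAdjoint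
  have hsqrtQ := (CFC.sqrt_nonneg Q).isSelfAdjoint
  have h₁ : Q * CFC.sqrt P = 0 :=
    hsqrtP.mul_eq_zero_comm hQ.isSelfAdjoint (cfcSqrt_mul_eq_zero hP hQ.isSelfAdjoint h)
  exact hsqrtQ.mul_eq_zero_comm hsqrtP (cfcSqrt_mul_eq_zero hQ hsqrtP h₁)

theorem cfcSqrt_add_of_mul_eq_zero (hP : 0 ≤ P) (hQ : 0 ≤ Q) (h : P * Q = 0) :
    CFC.sqrt (P + Q) = CFC.sqrt P + CFC.sqrt Q := by
  have hQP : Q * P = 0 := hP.isSelfAdjoint.mul_eq_zero_comm hQ.isSelfAdjoint h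
  refine CFC.sqrt_unique ?_ (add_nonneg (CFC.sqrt_nonneg P) (CFC.sqrt_nonneg Q))
  rw [add_mul, mul_add, mul_add, CFC.sqrt_mul_sqrt_self P hP, CFC.sqrt_mul_sqrt_self Q hQ,
    cfcSqrt_mul_cfcSqrt_eq_zero hP hQ h, cfcSqrt_mul_cfcSqrt_eq_zero hQ hP hQP, add_zero,
    zero_add]

end CFCSqrt

theorem transpose_mul_apply_self_le_sqrt_mul_sqrt {m n : Type*} [Fintype m] (X Y : Matrix m n ℝ)
    (j : n) :
    (Xᵀ * Y) j j ≤ √((Xᵀ * X) j j) * √((Yᵀ * Y) j j) := by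
  simpa [mul_apply, sq] using Real.sum_mul_le_sqrt_mul_sqrt Finset.univ (X · j) (Y · j)

end Matrix

theorem nuclearNorm_eq_trace_cfcSqrt {m n : ℕ} (M : Matrix (Fin m) (Fin n) ℝ) :
    nuclearNorm M = (CFC.sqrt (Mᵀ * M)).trace := by
  rw [nuclearNorm, PosSemidef.sqrt_eq_cfcSqrt, conjTranspose_eq_transpose_of_trivial]

theorem nuclearNorm_neg {m n : ℕ} (M : Matrix (Fin m) (Fin n) ℝ) :
    nuclearNorm (-M) = nuclearNorm M := by
  simp [nuclearNorm_eq_trace_cfcSqrt]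

theorem nuclearNorm_add_of_orthogonal {m n : ℕ} {X Y : Matrix (Fin m) (Fin n) ℝ}
    (h₁ : Xᵀ * Y = 0) (h₂ : X * Yᵀ = 0) :
    nuclearNorm (X + Y) = nuclearNorm X + nuclearNorm Y := by
  have h₁' : Yᵀ * X = 0 := by simpa using congrArg transpose h₁
  have hgram : (X + Y)ᵀ * (X + Y) = Xᵀ * X + Yᵀ * Y := by
    simp [Matrix.add_mul, Matrix.mul_add, h₁, h₁']
  have hprod : Xᵀ * X * (Yᵀ * Y) = 0 := by
    rw [Matrix.mul_assoc, ← Matrix.mul_assoc X, h₂, Matrix.zero_mul, Matrix.mul_zero]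
  have hnonneg (Z : Matrix (Fin m) (Fin n) ℝ) : 0 ≤ Zᵀ * Z := by
    simpa using (posSemidef_conjTranspose_mul_self Z).nonneg
  rw [nuclearNorm_eq_trace_cfcSqrt, hgram,
    cfcSqrt_add_of_mul_eq_zero (hnonneg X) (hnonneg Y) hprod, trace_add,
    nuclearNorm_eq_trace_cfcSqrt, nuclearNorm_eq_trace_cfcSqrt]

theorem exists_orthogonal_diagonalization_transpose_mul_self {m n : ℕ}
    (M : Matrix (Fin m) (Fin n) ℝ) :
    ∃ (V : Matrix (Fin n) (Fin n) ℝ) (μ : Fin n → ℝ), Vᵀ * V = 1 ∧ V * Vᵀ = 1 ∧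
      Mᵀ * M = V * diagonal μ * Vᵀ ∧ nuclearNorm M = ∑ j, √(μ j) := by
  have hM := posSemidef_conjTranspose_mul_self M
  have hU := hM.1.eigenvectorUnitary.2
  refine ⟨hM.1.eigenvectorUnitary, hM.1.eigenvalues, mem_unitaryGroup_iff'.mp hU,
    mem_unitaryGroup_iff.mp hU, ?_, ?_⟩
  · rw [← conjTranspose_eq_transpose_of_trivial M]
    exact hM.1.spectral_theorem
  · rw [nuclearNorm, PosSemidef.sqrt, trace_mul_cycle, mem_unitaryGroup_iff'.mp hU,
      Matrix.one_mul, trace_diagonal]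
    rfl

section Duality

variable {m n : ℕ}

theorem trace_transpose_mul_le_nuclearNorm {W : Matrix (Fin m) (Fin n) ℝ} (hW : Wᵀ * W ≤ 1)
    (M : Matrix (Fin m) (Fin n) ℝ) : (Wᵀ * M).trace ≤ nuclearNorm M := by
  obtain ⟨V, μ, hVV, hVV', hMM, hnorm⟩ :=
    exists_orthogonal_diagonalization_transpose_mul_self M
  have htrace : (Wᵀ * M).trace = ((W * V)ᵀ * (M * V)).trace := by
    rw [transpose_mul, Matrix.mul_assoc, trace_mul_comm Vᵀ]
    simp only [Matrix.mul_assoc, hVV', Matrix.mul_one]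
  have hgramW (j : Fin n) : ((W * V)ᵀ * (W * V)) j j ≤ 1 := by
    have h : (Vᵀ * (1 - Wᵀ * W) * V).PosSemidef := by
      simpa using (le_iff.mp hW).conjTranspose_mul_mul_same V
    have := h.diag_nonneg (i := j)
    simp only [Matrix.mul_sub, Matrix.sub_mul, Matrix.mul_one, hVV, transpose_mul,
      Matrix.mul_assoc] at this ⊢
    simpa [sub_nonneg] using this
  have hgramM : (M * V)ᵀ * (M * V) = diagonal μ := by
    rw [transpose_mul, Matrix.mul_assoc, ← Matrix.mul_assoc Mᵀ, hMM, Matrix.mul_assoc,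
      Matrix.mul_assoc, hVV, Matrix.mul_one, ← Matrix.mul_assoc, hVV, Matrix.one_mul]
  calc (Wᵀ * M).trace = ∑ j, ((W * V)ᵀ * (M * V)) j j := htrace
    _ ≤ ∑ j, √(((W * V)ᵀ * (W * V)) j j) * √(((M * V)ᵀ * (M * V)) j j) :=
      Finset.sum_le_sum fun j _ => transpose_mul_apply_self_le_sqrt_mul_sqrt _ _ j
    _ ≤ ∑ j, √(μ j) := Finset.sum_le_sum fun j _ => by
      rw [hgramM, diagonal_apply_eq]
      exact mul_le_of_le_one_left (Real.sqrt_nonneg _) (Real.sqrt_le_one.mpr (hgramW j))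
    _ = nuclearNorm M := hnorm.symm

theorem exists_transpose_mul_self_le_one_trace_eq_nuclearNorm (M : Matrix (Fin m) (Fin n) ℝ) :
    ∃ W : Matrix (Fin m) (Fin n) ℝ, Wᵀ * W ≤ 1 ∧ (Wᵀ * M).trace = nuclearNorm M := by
  obtain ⟨V, μ, hVV, hVV', hMM, hnorm⟩ :=
    exists_orthogonal_diagonalization_transpose_mul_self M
  have hconj (a b : Fin n → ℝ) :
      V * diagonal a * Vᵀ * (V * diagonal b * Vᵀ) = V * diagonal (a * b) * Vᵀ := by
    simp only [Matrix.mul_assoc]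
    rw [← Matrix.mul_assoc Vᵀ, hVV, Matrix.one_mul, ← Matrix.mul_assoc (diagonal a),
      diagonal_mul_diagonal]
    rfl
  -- `S` is the pseudo-inverse of `(MᵀM)^{1/2}`, thanks to the junk value `(√0)⁻¹ = 0`
  set g : Fin n → ℝ := fun j => (√(μ j))⁻¹
  set S := V * diagonal g * Vᵀ
  have hS : Sᵀ = S := by simp [S, Matrix.mul_assoc]
  have hgμ : g * μ = fun j => √(μ j) := funext fun j => by
    simp [g, inv_mul_eq_div, Real.div_sqrt]
  refine ⟨M * S, ?_, ?_⟩
  · have hone : (1 : Matrix (Fin n) (Fin n) ℝ) = V * diagonal 1 * Vᵀ := by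
      simp [hVV']
    have hd (j : Fin n) : 0 ≤ (1 - (fun j => √(μ j)) * g) j := by
      by_cases h : √(μ j) = 0 <;> simp [g, h]
    rw [le_iff, transpose_mul, hS, Matrix.mul_assoc, ← Matrix.mul_assoc Mᵀ, hMM, hconj, hconj,
      ← mul_assoc, hgμ, hone, ← Matrix.sub_mul, ← Matrix.mul_sub, diagonal_sub]
    have h := (posSemidef_diagonal_iff.mpr hd).mul_mul_conjTranspose_same V
    rw [conjTranspose_eq_transpose_of_trivial] at h
    exact h
  · rw [transpose_mul, hS, Matrix.mul_assoc, hMM, hconj, trace_mul_cycle, hVV, Matrix.one_mul,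
      trace_diagonal, hnorm, hgμ]

end Duality

theorem nuclearNorm_add_le {m n : ℕ} (M N : Matrix (Fin m) (Fin n) ℝ) :
    nuclearNorm (M + N) ≤ nuclearNorm M + nuclearNorm N := by
  obtain ⟨W, hW, hWMN⟩ := exists_transpose_mul_self_le_one_trace_eq_nuclearNorm (M + N)
  rw [← hWMN, Matrix.mul_add, trace_add]
  exact add_le_add (trace_transpose_mul_le_nuclearNorm hW M)
    (trace_transpose_mul_le_nuclearNorm hW N)

theorem stmt_4_general
    (m n k : ℕ)
    (Uk : Matrix (Fin m) (Fin k) ℝ) (Uc : Matrix (Fin m) (Fin (m - k)) ℝ)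
    (Vk : Matrix (Fin n) (Fin k) ℝ) (Vc : Matrix (Fin n) (Fin (n - k)) ℝ)
    (hUkc : Ukᵀ * Uc = 0)
    (hVkc : Vkᵀ * Vc = 0)
    (D : Matrix (Fin k) (Fin k) ℝ)
    (A : Matrix (Fin m) (Fin n) ℝ) (hA : A = Uk * D * Vkᵀ)
    (Δ Δ₁ Δ₂ : Matrix (Fin m) (Fin n) ℝ)
    (hΔ₂ : Δ₂ = Uc * Ucᵀ * Δ * Vc * Vcᵀ) (hΔ₁ : Δ₁ = Δ - Δ₂) :
    nuclearNorm Δ + 2 * nuclearNorm A - 2 * nuclearNorm (Δ + A)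
      ≤ 3 * nuclearNorm Δ₁ - nuclearNorm Δ₂ := by
  have hUcUk : Ucᵀ * Uk = 0 := by simpa using congrArg transpose hUkc
  have hVcVk : Vcᵀ * Vk = 0 := by simpa using congrArg transpose hVkc
  have horth₁ : Δ₂ᵀ * A = 0 := by
    simp only [hΔ₂, hA, transpose_mul, transpose_transpose, Matrix.mul_assoc]
    rw [← Matrix.mul_assoc Ucᵀ, hUcUk]
    simp
  have horth₂ : Δ₂ * Aᵀ = 0 := by
    simp only [hΔ₂, hA, transpose_mul, transpose_transpose, Matrix.mul_assoc]
    rw [← Matrix.mul_assoc Vcᵀ, hVcVk]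
    simp
  have hΔ : nuclearNorm Δ ≤ nuclearNorm Δ₁ + nuclearNorm Δ₂ := by
    simpa [hΔ₁] using nuclearNorm_add_le Δ₁ Δ₂
  have hΔA : nuclearNorm Δ₂ + nuclearNorm A ≤ nuclearNorm (Δ + A) + nuclearNorm Δ₁ := by
    rw [← nuclearNorm_add_of_orthogonal horth₁ horth₂, ← nuclearNorm_neg Δ₁]
    convert nuclearNorm_add_le (Δ + A) (-Δ₁) using 2
    rw [hΔ₁]; abel
  linarith

/-- The nuclear-norm cone inequality (equation (eq:triangular)) used in the
proofs of Theorems 3 and 4. -/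
theorem stmt_4
    (m n k : ℕ)
    (Uk : Matrix (Fin m) (Fin k) ℝ) (Uc : Matrix (Fin m) (Fin (m - k)) ℝ)
    (Vk : Matrix (Fin n) (Fin k) ℝ) (Vc : Matrix (Fin n) (Fin (n - k)) ℝ)
    (hUk : Ukᵀ * Uk = 1) (hUc : Ucᵀ * Uc = 1) (hUkc : Ukᵀ * Uc = 0)
    (hUfull : Uk * Ukᵀ + Uc * Ucᵀ = 1)
    (hVk : Vkᵀ * Vk = 1) (hVc : Vcᵀ * Vc = 1) (hVkc : Vkᵀ * Vc = 0)
    (hVfull : Vk * Vkᵀ + Vc * Vcᵀ = 1)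
    (D : Matrix (Fin k) (Fin k) ℝ)
    (A : Matrix (Fin m) (Fin n) ℝ) (hA : A = Uk * D * Vkᵀ)
    (Δ Δ₁ Δ₂ : Matrix (Fin m) (Fin n) ℝ)
    (hΔ₂ : Δ₂ = Uc * Ucᵀ * Δ * Vc * Vcᵀ) (hΔ₁ : Δ₁ = Δ - Δ₂) :
    nuclearNorm Δ + 2 * nuclearNorm A - 2 * nuclearNorm (Δ + A)
      ≤ 3 * nuclearNorm Δ₁ - nuclearNorm Δ₂ :=
  stmt_4_general m n k Uk Uc Vk Vc hUkc hVkc D A hA Δ Δ₁ Δ₂ hΔ₂ hΔ₁
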